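/- (Extrapolation of Carleson measures, dyadic version.) Let μ : 𝐏⁺ → [0,∞) satisfy ‖μ‖_{size*(𝐏⁺)} < ∞ and let δ > 0. Let μ′ : 𝐏⁺ → [0,∞) satisfy the weak Carleson condition μ′(P) ≤ C₁|I_P| for all P ∈ 𝐏⁺, and suppose ‖μ′‖_{size(T)} ≤ C₂ for every convex tree T with ‖μ‖_{size*(T)} ≤ δ. Then ‖μ′‖_{size*(𝐏⁺)} ≤ C(‖μ‖_{size*(𝐏⁺)}, δ)·(C₁ + C₂), where the constant C depends only on ‖μ‖_{size*(𝐏⁺)} and δ. -/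

import Mathlib

open MeasureTheory Set

noncomputable section

namespace Dyadic

/-- A dyadic interval/lacunary tile: `I = [j·2^k, (j+1)·2^k)` with `-M ≤ k ≤ M`,
`I ⊆ [0, 2^M)`.  Lacunary tiles are in bijection with dyadic intervals, so we
identify the tile `P⁺(I) = I × [1/|I|, 2/|I|)` with the data of `I`. -/
structure Tile (M : ℕ) where
  j : ℤ
  k : ℤ
  hk_lb : -(M : ℤ) ≤ k
  hk_ub : k ≤ (M : ℤ)
  hj : 0 ≤ j
  hsub : ((j : ℝ) + 1) * 2 ^ k ≤ 2 ^ (M : ℤ)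

variable {M : ℕ}

/-- The side length `|I_P| = 2^k` of the spatial interval of the tile. -/
def Tile.len (P : Tile M) : ℝ := 2 ^ P.k

/-- The spatial interval `I_P` of the tile. -/
def Tile.ival (P : Tile M) : Set ℝ :=
  Ico ((P.j : ℝ) * 2 ^ P.k) (((P.j : ℝ) + 1) * 2 ^ P.k)

/-- The order `P ≤′ Q` on lacunary tiles: `I_P ⊆ I_Q`. -/
def Tile.le (P Q : Tile M) : Prop := P.ival ⊆ Q.ival

/-- A (lacunary) tree: a collection of tiles together with a top tile. -/
structure Tree (M : ℕ) where
  tiles : Set (Tile M)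
  top : Tile M
  top_mem : top ∈ tiles
  le_top : ∀ P ∈ tiles, P.le top

/-- `|I_T|`, the length of the spatial interval of the top of the tree. -/
def Tree.len (T : Tree M) : ℝ := T.top.len

/-- A collection of tiles is convex if `P₁ ≤′ P ≤′ P₂` with `P₁, P₂` in the
collection implies `P` is in the collection. -/
def IsConvex (PP : Set (Tile M)) : Prop :=
  ∀ P₁ ∈ PP, ∀ P₂ ∈ PP, ∀ P : Tile M, P₁.le P → P.le P₂ → P ∈ PP

/-- The size `‖a‖_{size(T)} = (1/|I_T|) Σ_{P ∈ T} a(P)` of `a` on a tree `T`. -/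
def treeSize (a : Tile M → ℝ) (T : Tree M) : ℝ :=
  (∑ᶠ P ∈ T.tiles, a P) / T.len

/-- The maximal size `‖a‖_{size*(PP)}`: the supremum of `‖a‖_{size(T)}` over all
convex trees `T ⊆ PP` (by convention `0` if there are none). -/
def maxSize (a : Tile M → ℝ) (PP : Set (Tile M)) : ℝ :=
  sSup (insert 0 {s : ℝ | ∃ T : Tree M, T.tiles ⊆ PP ∧ IsConvex T.tiles ∧ s = treeSize a T})

/-- The complete tree `Tree(P) = {Q : Q ≤′ P}`. -/
def cTree (P : Tile M) : Set (Tile M) := {Q : Tile M | Q.le P}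

/-- A tree `T` is complete with respect to `PP` if `T = Tree(P_T) ∩ PP`. -/
def Tree.IsCompleteIn (T : Tree M) (PP : Set (Tile M)) : Prop :=
  T.tiles = cTree T.top ∩ PP

/-- `QQ` is an `α`-packing of the tree `T`: `QQ ⊆ T` and `Σ_{P ∈ QQ} |I_P| ≤ α|I_T|`. -/
def IsPacking (α : ℝ) (QQ : Set (Tile M)) (T : Tree M) : Prop :=
  QQ ⊆ T.tiles ∧ (∑ᶠ P ∈ QQ, Tile.len P) ≤ α * T.len

/-- `QQ` is a uniform `α`-packing of the tree `T`:
`Σ_{P ∈ QQ, I_P ⊆ J} |I_P| ≤ α|J|` for every dyadic interval `J`. -/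
def IsUniformPacking (α : ℝ) (QQ : Set (Tile M)) (T : Tree M) : Prop :=
  QQ ⊆ T.tiles ∧
    ∀ J : Tile M, (∑ᶠ P ∈ {P ∈ QQ | P.ival ⊆ J.ival}, Tile.len P) ≤ α * J.len

/-- Left half of the spatial interval. -/
def Tile.left (P : Tile M) : Set ℝ :=
  Ico ((P.j : ℝ) * 2 ^ P.k) (((P.j : ℝ) + 1 / 2) * 2 ^ P.k)

/-- Right half of the spatial interval. -/
def Tile.right (P : Tile M) : Set ℝ :=
  Ico (((P.j : ℝ) + 1 / 2) * 2 ^ P.k) (((P.j : ℝ) + 1) * 2 ^ P.k)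

/-- The (mother) Haar wavelet `φ_P = |I_P|^{-1/2}(χ_{I_l} - χ_{I_r})`. -/
def Tile.haar (P : Tile M) : ℝ → ℝ := fun x =>
  (Real.sqrt P.len)⁻¹ * (P.left.indicator 1 x - P.right.indicator 1 x)

/-- The Haar (wavelet) coefficient `Wf(P) = ⟨f, φ_P⟩`. -/
def waveCoeff (f : ℝ → ℝ) (P : Tile M) : ℝ := ∫ x, f x * P.haar x

/-- The average `[f]_{I_P} = (1/|I_P|)∫_{I_P} f`. -/
def tileAvg (f : ℝ → ℝ) (P : Tile M) : ℝ := (∫ x in P.ival, f x) / P.len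

/-- The mean `‖f‖_{mean(P)} = (1/|I_P|)∫_{I_P} |f|`. -/
def tileMean (f : ℝ → ℝ) (P : Tile M) : ℝ := (∫ x in P.ival, |f x|) / P.len

/-- The maximal mean `‖f‖_{mean*(PP)} = sup_{P ∈ PP} ‖f‖_{mean(P)}`. -/
def maxMean (f : ℝ → ℝ) (PP : Set (Tile M)) : ℝ :=
  sSup (insert 0 (tileMean f '' PP))

/-- The dyadic BMO norm `‖f‖_{BMO} = ‖|Wf|²‖_{size*(PP⁺)}^{1/2}`. -/
def bmoNorm (M : ℕ) (f : ℝ → ℝ) : ℝ :=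
  Real.sqrt (maxSize (fun P : Tile M => waveCoeff f P ^ 2) univ)

/-- The grid interval `[j·2^{-M}, (j+1)·2^{-M})` at the finest scale. -/
def gridIval (M : ℕ) (j : ℤ) : Set ℝ :=
  Ico ((j : ℝ) * 2 ^ (-(M : ℤ))) (((j : ℝ) + 1) * 2 ^ (-(M : ℤ)))

/-- A dyadic test function: supported on `[0, 2^M)` and constant on every dyadic
interval of length `2^{-M}`. -/
def IsTestFun (M : ℕ) (f : ℝ → ℝ) : Prop :=
  (∀ x : ℝ, x ∉ Ico (0 : ℝ) (2 ^ (M : ℤ)) → f x = 0) ∧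
    ∀ j : ℤ, ∀ x ∈ gridIval M j, ∀ y ∈ gridIval M j, f x = f y

/-- The `L²` norm. -/
def l2Norm (f : ℝ → ℝ) : ℝ := Real.sqrt (∫ x, f x ^ 2)

/-- The `L^∞` norm (as a supremum of values; adequate for test functions). -/
def supNorm (f : ℝ → ℝ) : ℝ := ⨆ x : ℝ, |f x|

/-- The weak `L^r` quasinorm `sup_{λ>0} λ |{|h| ≥ λ}|^{1/r}`. -/
def weakNorm (r : ℝ) (h : ℝ → ℝ) : ℝ :=
  sSup {s : ℝ | ∃ l : ℝ, 0 < l ∧ s = l * (volume {x : ℝ | l ≤ |h x|}).toReal ^ (1 / r)}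

/-- The phase space projection `Π_T f = Σ_{P ∈ T} ⟨f, φ_P⟩ φ_P` onto a tree. -/
def treeProj (T : Tree M) (f : ℝ → ℝ) : ℝ → ℝ := fun x =>
  ∑ᶠ P ∈ T.tiles, waveCoeff f P * P.haar x

/-- The high-low paraproduct `π_hl(f,g) = Σ_P Wf(P) [g]_P φ_P`. -/
def paraHL (M : ℕ) (f g : ℝ → ℝ) : ℝ → ℝ := fun x =>
  ∑ᶠ P : Tile M, waveCoeff f P * tileAvg g P * P.haar x

/-- The low-high paraproduct `π_lh(f,g) = Σ_P [f]_P Wg(P) φ_P`. -/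
def paraLH (M : ℕ) (f g : ℝ → ℝ) : ℝ → ℝ := fun x =>
  ∑ᶠ P : Tile M, tileAvg f P * waveCoeff g P * P.haar x

/-- The high-high paraproduct `π_hh(f,g) = Σ_P Wf(P) Wg(P) χ_{I_P}/|I_P|`. -/
def paraHH (M : ℕ) (f g : ℝ → ℝ) : ℝ → ℝ := fun x =>
  ∑ᶠ P : Tile M, waveCoeff f P * waveCoeff g P * P.ival.indicator 1 x / P.len

/-- The constant function `1` on `[0, 2^M)`. -/
def oneFn (M : ℕ) : ℝ → ℝ := (Ico (0 : ℝ) (2 ^ (M : ℤ))).indicator 1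

/-- A perfect dyadic Calderón–Zygmund operator, recorded via its kernel `K` and
kernel constant `A₀`. -/
structure PDCZ (M : ℕ) where
  K : ℝ → ℝ → ℝ
  A₀ : ℝ
  hA₀ : 0 < A₀
  meas : Measurable (Function.uncurry K)
  bound : ∀ x y : ℝ, x ≠ y → |K x y| ≤ A₀ / |x - y|
  perfectX : ∀ I J : Tile M, Disjoint I.ival J.ival →
    ∀ x ∈ I.ival, ∀ x' ∈ I.ival, ∀ y ∈ J.ival, K x y = K x' y
  perfectY : ∀ I J : Tile M, Disjoint I.ival J.ival →
    ∀ x ∈ I.ival, ∀ x' ∈ I.ival, ∀ y ∈ J.ival, K y x = K y x'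
  diag : ∀ I : Tile M, I.k = -(M : ℤ) → ∀ x ∈ I.ival, ∀ y ∈ I.ival, K x y = 0
  corner₁ : ∀ x ∈ Ico (0 : ℝ) (2 ^ ((M : ℤ) - 1)),
    ∀ y ∈ Ico ((2 : ℝ) ^ ((M : ℤ) - 1)) (2 ^ (M : ℤ)), K x y = 0
  corner₂ : ∀ x ∈ Ico ((2 : ℝ) ^ ((M : ℤ) - 1)) (2 ^ (M : ℤ)),
    ∀ y ∈ Ico (0 : ℝ) (2 ^ ((M : ℤ) - 1)), K x y = 0

/-- `Tf(x) = ∫ K(x,y) f(y) dy`. -/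
def PDCZ.app (Op : PDCZ M) (f : ℝ → ℝ) : ℝ → ℝ := fun x => ∫ y, Op.K x y * f y

/-- The transpose `T*f(x) = ∫ K(y,x) f(y) dy`. -/
def PDCZ.appT (Op : PDCZ M) (f : ℝ → ℝ) : ℝ → ℝ := fun x => ∫ y, Op.K y x * f y

/-- Complex-valued Haar coefficient. -/
def waveCoeffC (b : ℝ → ℂ) (P : Tile M) : ℂ := ∫ x, b x * (P.haar x : ℂ)

/-- Complex-valued average. -/
def tileAvgC (b : ℝ → ℂ) (P : Tile M) : ℂ := (∫ x in P.ival, b x) / (P.len : ℂ)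

/-- BMO norm of a complex-valued function. -/
def bmoNormC (M : ℕ) (b : ℝ → ℂ) : ℝ :=
  Real.sqrt (maxSize (fun P : Tile M => ‖waveCoeffC b P‖ ^ 2) univ)

/-- Complex-valued dyadic test functions. -/
def IsTestFunC (M : ℕ) (b : ℝ → ℂ) : Prop :=
  (∀ x : ℝ, x ∉ Ico (0 : ℝ) (2 ^ (M : ℤ)) → b x = 0) ∧
    ∀ j : ℤ, ∀ x ∈ gridIval M j, ∀ y ∈ gridIval M j, b x = b y

/-- The operator applied to a complex-valued function. -/
def PDCZ.appC (Op : PDCZ M) (b : ℝ → ℂ) : ℝ → ℂ := fun x => ∫ y, (Op.K x y : ℂ) * b y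

/-!
Fix a convex tree `T` and `w = δ / 2`. Give each `P ∈ T` the height
`upSum P = ∑_{P ≤′ P' ∈ T} μ(P') / |I_{P'}|` and the level `⌊upSum P / w⌋`.
A heavy tile (`μ(P) > w |I_P|`) has `μ'(P) ≤ C₁ |I_P| < C₁ μ(P) / w`, so heavy tiles carry
at most `C₁ B |I_T| / w`. The light tiles of one level lying below a maximal such tile `Q` form
a convex tree on which every vertical chain has `μ`-mass below `2w = δ`, so the local
hypothesis bounds their `μ'`-mass by `C₂ |I_Q|`. The maximal tiles containing a point `x`
have distinct levels, at most the level of the smallest one, so integrating in `x` gives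
`∑ |I_Q| ≤ |I_T| + ∑_T μ / w ≤ (1 + B / w) |I_T|`.
-/

theorem _root_.Int.floor_div_two_zpow {k k' : ℤ} (h : k ≤ k') (x : ℝ) :
    ⌊x / 2 ^ k'⌋ = ⌊x / 2 ^ k⌋ / 2 ^ (k' - k).toNat := by
  have : (2 : ℝ) ^ k' = 2 ^ k * ((2 ^ (k' - k).toNat : ℕ) : ℝ) := by
    rw [Nat.cast_pow, Nat.cast_ofNat, ← zpow_natCast, Int.toNat_of_nonneg (by omega),
      ← zpow_add₀ two_ne_zero, add_sub_cancel]
  rw [this, ← div_div, Int.floor_div_natCast, Nat.cast_pow, Nat.cast_ofNat]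

namespace Tile

theorem len_pos (P : Tile M) : 0 < P.len := zpow_pos two_pos _

theorem ext {P Q : Tile M} (hj : P.j = Q.j) (hk : P.k = Q.k) : P = Q := by
  cases P; cases Q; cases hj; cases hk; rfl

theorem mem_ival_iff {P : Tile M} {x : ℝ} : x ∈ P.ival ↔ ⌊x / 2 ^ P.k⌋ = P.j := by
  have h : (0 : ℝ) < 2 ^ P.k := P.len_pos
  rw [Int.floor_eq_iff, le_div_iff₀ h, div_lt_iff₀ h, ival, mem_Ico]

theorem eq_of_ival_eq {P Q : Tile M} (h : P.ival = Q.ival) : P = Q := by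
  have hP : (P.j : ℝ) * 2 ^ P.k < (P.j + 1) * 2 ^ P.k :=
    mul_lt_mul_of_pos_right (lt_add_one _) P.len_pos
  obtain ⟨hleft, hright⟩ := (Ico_eq_Ico_iff (Or.inl hP)).1 h
  have hk : P.k = Q.k :=
    zpow_right_injective₀ two_pos (by norm_num) (by linarith : (2 : ℝ) ^ P.k = 2 ^ Q.k)
  refine ext ?_ hk
  rw [hk] at hleft
  exact_mod_cast mul_right_cancel₀ (Q.len_pos.ne') hleft

theorem le_refl (P : Tile M) : P.le P := subset_rfl

theorem le_antisymm {P Q : Tile M} (h : P.le Q) (h' : Q.le P) : P = Q :=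
  eq_of_ival_eq (h.antisymm h')

theorem le_of_k_le {P Q : Tile M} {x : ℝ} (hk : P.k ≤ Q.k) (hP : x ∈ P.ival)
    (hQ : x ∈ Q.ival) : P.le Q := fun y hy => by
  rw [mem_ival_iff] at hP hQ hy ⊢
  rw [Int.floor_div_two_zpow hk, hy, ← hP, ← Int.floor_div_two_zpow hk, hQ]

theorem le_or_le_of_mem_ival {P Q : Tile M} {x : ℝ} (hP : x ∈ P.ival) (hQ : x ∈ Q.ival) :
    P.le Q ∨ Q.le P :=
  (le_total P.k Q.k).imp (le_of_k_le · hP hQ) (le_of_k_le · hQ hP)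

theorem j_lt_four_pow (P : Tile M) : P.j < 4 ^ M := by
  have h1 : ((P.j : ℝ) + 1) * 2 ^ P.k ≤ 2 ^ (M : ℤ) := P.hsub
  have h2 : (2 : ℝ) ^ (-(M : ℤ)) ≤ 2 ^ P.k := zpow_le_zpow_right₀ one_le_two P.hk_lb
  have h3 : (2 : ℝ) ^ (M : ℤ) * 2 ^ (-(M : ℤ)) = 1 := by
    rw [← zpow_add₀ two_ne_zero, add_neg_cancel, zpow_zero]
  have h4 : (P.j : ℝ) < 4 ^ M := by
    have : (4 : ℝ) ^ M = 2 ^ (M : ℤ) * 2 ^ (M : ℤ) := by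
      rw [zpow_natCast, ← mul_pow]; norm_num
    have hj : (0 : ℝ) ≤ P.j := by exact_mod_cast P.hj
    nlinarith [zpow_pos (two_pos (α := ℝ)) (-(M : ℤ)), zpow_pos (two_pos (α := ℝ)) (M : ℤ)]
  exact_mod_cast h4

theorem exists_forall_le_of_mem_ival {D : Finset (Tile M)} (hD : D.Nonempty) {x : ℝ}
    (hx : ∀ P ∈ D, x ∈ P.ival) : ∃ P₀ ∈ D, ∀ P ∈ D, P₀.le P := by
  obtain ⟨P₀, hP₀, hmin⟩ := D.exists_minimalFor Tile.ival hD
  refine ⟨P₀, hP₀, fun P hP => ?_⟩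
  exact (le_or_le_of_mem_ival (hx P₀ hP₀) (hx P hP)).elim id (hmin hP)

theorem measurableSet_ival (P : Tile M) : MeasurableSet P.ival := measurableSet_Ico

theorem volume_real_ival (P : Tile M) : volume.real P.ival = P.len := by
  have : (P.j : ℝ) * 2 ^ P.k ≤ (P.j + 1) * 2 ^ P.k :=
    mul_le_mul_of_nonneg_right (by linarith) P.len_pos.le
  rw [measureReal_def, Tile.ival, Real.volume_Ico, ENNReal.toReal_ofReal (by linarith), Tile.len]
  ring

theorem integrable_indicator_const (P : Tile M) (e : ℝ) :
    Integrable (P.ival.indicator fun _ => e) :=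
  (integrable_indicator_iff P.measurableSet_ival).2 (integrableOn_const (by simp [Tile.ival]))

theorem integral_indicator_const (P : Tile M) (e : ℝ) :
    ∫ x, P.ival.indicator (fun _ => e) x = e * P.len := by
  rw [MeasureTheory.integral_indicator_const _ P.measurableSet_ival, P.volume_real_ival,
    smul_eq_mul, _root_.mul_comm]

end Tile

instance : Finite (Tile M) :=
  have : Finite (Icc ((0 : ℤ), -(M : ℤ)) (4 ^ M, M)) := (finite_Icc _ _).to_subtype
  Finite.of_injective
    (fun P : Tile M => (⟨(P.j, P.k), ⟨P.hj, P.hk_lb⟩, ⟨P.j_lt_four_pow.le, P.hk_ub⟩⟩ :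
      Icc ((0 : ℤ), -(M : ℤ)) (4 ^ M, M)))
    fun _ _ h => Tile.ext (congrArg (·.1.1) h) (congrArg (·.1.2) h)

noncomputable instance : Fintype (Tile M) := Fintype.ofFinite _

theorem Tree.ext {T T' : Tree M} (htiles : T.tiles = T'.tiles) (htop : T.top = T'.top) :
    T = T' := by
  cases T; cases T'; cases htiles; cases htop; rfl

instance : Finite (Tree M) :=
  Finite.of_injective (fun T : Tree M => (T.tiles, T.top))
    fun _ _ h => Tree.ext (congrArg Prod.fst h) (congrArg Prod.snd h)

open scoped Classical

theorem Tree.len_pos (T : Tree M) : 0 < T.len := T.top.len_pos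

theorem treeSize_le_iff {a : Tile M → ℝ} {T : Tree M} {c : ℝ} :
    treeSize a T ≤ c ↔ ∑ P ∈ T.tiles.toFinset, a P ≤ c * T.len := by
  rw [treeSize, finsum_mem_eq_toFinset_sum, div_le_iff₀ T.len_pos]

theorem treeSize_le_maxSize {a : Tile M → ℝ} {PP : Set (Tile M)} {T : Tree M}
    (hT : T.tiles ⊆ PP) (hconv : IsConvex T.tiles) : treeSize a T ≤ maxSize a PP := by
  refine le_csSup ((finite_range (treeSize a)).insert 0 |>.subset ?_).bddAbove
    (mem_insert_of_mem _ ⟨T, hT, hconv, rfl⟩)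
  rintro _ (rfl | ⟨T', -, -, rfl⟩)
  exacts [mem_insert _ _, mem_insert_of_mem _ ⟨T', rfl⟩]

theorem maxSize_le {a : Tile M → ℝ} {PP : Set (Tile M)} {c : ℝ} (hc : 0 ≤ c)
    (h : ∀ T : Tree M, T.tiles ⊆ PP → IsConvex T.tiles → treeSize a T ≤ c) :
    maxSize a PP ≤ c := by
  refine csSup_le (insert_nonempty _ _) ?_
  rintro _ (rfl | ⟨T, hT, hconv, rfl⟩)
  exacts [hc, h T hT hconv]

/-- Integrate the pointwise inequality. -/
theorem sum_mul_len_le_of_forall {s t : Finset (Tile M)} {c d : Tile M → ℝ}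
    (h : ∀ x, ∑ P ∈ s with x ∈ P.ival, c P ≤ ∑ P ∈ t with x ∈ P.ival, d P) :
    ∑ P ∈ s, c P * P.len ≤ ∑ P ∈ t, d P * P.len := by
  have hind (u : Finset (Tile M)) (e : Tile M → ℝ) (x : ℝ) :
      ∑ P ∈ u with x ∈ P.ival, e P = ∑ P ∈ u, P.ival.indicator (fun _ => e P) x := by
    simp only [Finset.sum_filter, indicator_apply]
  have hint (u : Finset (Tile M)) (e : Tile M → ℝ) :
      ∫ x, ∑ P ∈ u, P.ival.indicator (fun _ => e P) x = ∑ P ∈ u, e P * P.len := by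
    rw [integral_finsetSum _ fun P _ => P.integrable_indicator_const (e P)]
    exact Finset.sum_congr rfl fun P _ => P.integral_indicator_const (e P)
  rw [← hint, ← hint]
  refine integral_mono (integrable_finsetSum _ fun P _ => P.integrable_indicator_const (c P))
    (integrable_finsetSum _ fun P _ => P.integrable_indicator_const (d P)) fun x => ?_
  simpa only [hind] using h x

section Stopping

open Finset

variable (μ : Tile M → ℝ) (S : Finset (Tile M)) (w : ℝ)

def upSum (P : Tile M) : ℝ := ∑ P' ∈ S with P.le P', μ P' / P'.len

def level (P : Tile M) : ℕ := ⌊upSum μ S P / w⌋₊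

def lightTiles : Finset (Tile M) := {P ∈ S | μ P ≤ w * P.len}

def levelTops : Finset (Tile M) :=
  {Q ∈ lightTiles μ S w |
    ∀ Q' ∈ lightTiles μ S w, Q.le Q' → level μ S w Q' = level μ S w Q → Q = Q'}

def levelSlab (Q : Tile M) : Finset (Tile M) :=
  {P ∈ lightTiles μ S w | P.le Q ∧ level μ S w P = level μ S w Q}

variable {μ S w}

theorem exists_mem_levelTops_le {P : Tile M} (hP : P ∈ lightTiles μ S w) :
    ∃ Q ∈ levelTops μ S w, P.le Q ∧ level μ S w Q = level μ S w P := by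
  obtain ⟨Q, hQ, hmax⟩ := exists_maximalFor Tile.ival
    {Q ∈ lightTiles μ S w | P.le Q ∧ level μ S w Q = level μ S w P}
    ⟨P, mem_filter.2 ⟨hP, P.le_refl, rfl⟩⟩
  obtain ⟨hQl, hPQ, hQlev⟩ := mem_filter.1 hQ
  refine ⟨Q, mem_filter.2 ⟨hQl, fun Q' hQ' hle hlev => ?_⟩, hPQ, hQlev⟩
  exact Tile.le_antisymm hle
    (hmax (mem_filter.2 ⟨hQ', hPQ.trans hle, hlev.trans hQlev⟩) hle)

variable (hμ : ∀ P, 0 ≤ μ P)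
include hμ

theorem div_len_nonneg (P : Tile M) : 0 ≤ μ P / P.len := div_nonneg (hμ P) P.len_pos.le

theorem upSum_nonneg (P : Tile M) : 0 ≤ upSum μ S P :=
  sum_nonneg fun P' _ => div_len_nonneg hμ P'

theorem upSum_anti {P P' : Tile M} (h : P.le P') : upSum μ S P' ≤ upSum μ S P :=
  sum_le_sum_of_subset_of_nonneg (monotone_filter_right _ fun _ _ => h.trans)
    fun P'' _ _ => div_len_nonneg hμ P''

theorem div_len_add_upSum_le {P P' : Tile M} (hP : P ∈ S) (h : P.le P') (hne : P ≠ P') :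
    μ P / P.len + upSum μ S P' ≤ upSum μ S P := by
  have hnot : P ∉ {P'' ∈ S | P'.le P''} := fun hP' =>
    hne (Tile.le_antisymm h (mem_filter.1 hP').2)
  rw [upSum, upSum, ← sum_insert (f := fun P'' => μ P'' / P''.len) hnot]
  refine sum_le_sum_of_subset_of_nonneg ?_ fun P'' _ _ => div_len_nonneg hμ P''
  refine insert_subset (mem_filter.2 ⟨hP, P.le_refl⟩) ?_
  exact monotone_filter_right _ fun _ _ => h.trans

theorem sum_between_le {P R : Tile M} (h : P.le R) :
    ∑ P' ∈ S with P.le P' ∧ P'.le R, μ P' / P'.len ≤ upSum μ S P - upSum μ S R + μ R / R.len := by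
  have hsub : {P' ∈ S | R.le P'} ⊆ {P' ∈ S | P.le P'} :=
    monotone_filter_right _ fun _ _ => h.trans
  have hbetween : {P' ∈ S | P.le P' ∧ P'.le R} ⊆
      insert R ({P' ∈ S | P.le P'} \ {P' ∈ S | R.le P'}) := by
    intro P' hP'
    simp only [Finset.mem_filter, Finset.mem_insert, Finset.mem_sdiff] at hP' ⊢
    by_cases hR : P' = R
    · exact Or.inl hR
    · exact Or.inr ⟨⟨hP'.1, hP'.2.1⟩, fun hR' => hR (Tile.le_antisymm hP'.2.2 hR'.2)⟩
  calc _ ≤ ∑ P' ∈ insert R ({P' ∈ S | P.le P'} \ {P' ∈ S | R.le P'}), μ P' / P'.len :=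
        sum_le_sum_of_subset_of_nonneg hbetween fun P'' _ _ => div_len_nonneg hμ P''
    _ = _ := by
        rw [sum_insert (by simp +contextual [Tile.le_refl]), sum_sdiff_eq_sub hsub,
          upSum, upSum]
        ring

variable (hw : 0 < w)
include hw

theorem level_anti {P P' : Tile M} (h : P.le P') : level μ S w P' ≤ level μ S w P :=
  Nat.floor_mono (div_le_div_of_nonneg_right (upSum_anti hμ h) hw.le)

theorem level_le_upSum_div (P : Tile M) : (level μ S w P : ℝ) ≤ upSum μ S P / w :=
  Nat.floor_le (div_nonneg (upSum_nonneg hμ P) hw.le)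

theorem upSum_sub_lt_of_level_eq {P P' : Tile M} (h : level μ S w P = level μ S w P') :
    upSum μ S P - upSum μ S P' < w := by
  have h₁ := level_le_upSum_div (S := S) hμ hw P'
  have h₂ : upSum μ S P / w < level μ S w P + 1 := Nat.lt_floor_add_one _
  rw [h] at h₂
  have : (upSum μ S P - upSum μ S P') / w < 1 := by rw [sub_div]; linarith
  rwa [div_lt_one hw] at this

theorem level_eq_of_le_of_le {P₁ P P₂ : Tile M} (h₁ : P₁.le P) (h₂ : P.le P₂)
    (h : level μ S w P₁ = level μ S w P₂) : level μ S w P = level μ S w P₂ :=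
  le_antisymm (h ▸ level_anti hμ hw h₁) (level_anti hμ hw h₂)

/-- The term `μ P / |I_P|` is part of the increment `upSum P - upSum P₂ < w`. -/
theorem mem_lightTiles_of_le_of_level_eq {P P₂ : Tile M} (hP : P ∈ S)
    (hP₂ : P₂ ∈ lightTiles μ S w) (h : P.le P₂) (hlev : level μ S w P = level μ S w P₂) :
    P ∈ lightTiles μ S w := by
  rcases eq_or_ne P P₂ with rfl | hne
  · exact hP₂
  have hlt : μ P / P.len < w := by
    linarith [div_len_add_upSum_le hμ hP h hne, upSum_sub_lt_of_level_eq hμ hw hlev]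
  exact mem_filter.2 ⟨hP, by linarith [(div_lt_iff₀ P.len_pos).1 hlt]⟩

theorem isConvex_levelSlab (hS : IsConvex (S : Set (Tile M))) (Q : Tile M) :
    IsConvex (levelSlab μ S w Q : Set (Tile M)) := by
  intro P₁ hP₁ P₂ hP₂ P h₁ h₂
  obtain ⟨hP₁l, -, hP₁lev⟩ := mem_filter.1 hP₁
  obtain ⟨hP₂l, hP₂Q, hP₂lev⟩ := mem_filter.1 hP₂
  have hPS : P ∈ S := hS P₁ (mem_filter.1 hP₁l).1 P₂ (mem_filter.1 hP₂l).1 P h₁ h₂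
  have hlev := level_eq_of_le_of_le hμ hw h₁ h₂ (hP₁lev.trans hP₂lev.symm)
  exact mem_filter.2
    ⟨mem_lightTiles_of_le_of_level_eq hμ hw hPS hP₂l h₂ hlev, h₂.trans hP₂Q, hlev.trans hP₂lev⟩

theorem sum_le_two_mul_len_of_level_eq (T : Tree M) (hsub : T.tiles ⊆ S)
    (hlev : ∀ P ∈ T.tiles, level μ S w P = level μ S w T.top) (htop : μ T.top ≤ w * T.len) :
    ∑ P ∈ T.tiles.toFinset, μ P ≤ 2 * w * T.len := by
  suffices key : ∑ P ∈ T.tiles.toFinset, μ P / P.len * P.len ≤ ∑ P ∈ {T.top}, 2 * w * P.len by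
    simpa [div_mul_cancel₀ _ (Tile.len_pos _).ne', Tree.len] using key
  refine sum_mul_len_le_of_forall fun x => ?_
  rw [filter_singleton]
  set D := {P ∈ T.tiles.toFinset | x ∈ P.ival}
  rcases D.eq_empty_or_nonempty with hD | hD
  · rw [hD, sum_empty]
    split_ifs <;> simp [hw.le]
  obtain ⟨P₀, hP₀, hmin⟩ :=
    Tile.exists_forall_le_of_mem_ival hD fun P hP => (mem_filter.1 hP).2
  have hP₀T : P₀ ∈ T.tiles := Set.mem_toFinset.1 (mem_filter.1 hP₀).1
  rw [if_pos (T.le_top P₀ hP₀T (mem_filter.1 hP₀).2), sum_singleton]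
  have hchain : D ⊆ {P ∈ S | P₀.le P ∧ P.le T.top} := fun P hP => by
    have hPT : P ∈ T.tiles := Set.mem_toFinset.1 (mem_filter.1 hP).1
    exact mem_filter.2 ⟨hsub hPT, hmin P hP, T.le_top P hPT⟩
  have htop' : μ T.top / T.top.len ≤ w := by
    rw [div_le_iff₀ T.top.len_pos]; exact htop
  calc ∑ P ∈ D, μ P / P.len
      ≤ ∑ P ∈ S with P₀.le P ∧ P.le T.top, μ P / P.len :=
        sum_le_sum_of_subset_of_nonneg hchain fun P _ _ => div_len_nonneg hμ P
    _ ≤ upSum μ S P₀ - upSum μ S T.top + μ T.top / T.top.len :=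
        sum_between_le hμ (T.le_top P₀ hP₀T)
    _ ≤ 2 * w := by linarith [upSum_sub_lt_of_level_eq hμ hw (hlev P₀ hP₀T)]

theorem maxSize_levelSlab_le (Q : Tile M) : maxSize μ (levelSlab μ S w Q) ≤ 2 * w := by
  refine maxSize_le (by positivity) fun T hT _ => treeSize_le_iff.2 ?_
  have hslab (P : Tile M) (hP : P ∈ T.tiles) :
      P ∈ lightTiles μ S w ∧ P.le Q ∧ level μ S w P = level μ S w Q :=
    mem_filter.1 (hT hP)
  obtain ⟨htop, -, htoplev⟩ := hslab _ T.top_mem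
  exact sum_le_two_mul_len_of_level_eq hμ hw T (fun P hP => (mem_filter.1 (hslab P hP).1).1)
    (fun P hP => (hslab P hP).2.2.trans htoplev.symm) (mem_filter.1 htop).2

/-- Nested tops of the same level coincide, so the tops containing `x` have distinct levels,
all at most the level of the smallest of them. -/
theorem card_levelTops_filter_mem_le (x : ℝ) :
    (#{Q ∈ levelTops μ S w | x ∈ Q.ival} : ℝ) ≤ ∑ P ∈ S with x ∈ P.ival, μ P / P.len / w + 1 := by
  set D := {Q ∈ levelTops μ S w | x ∈ Q.ival}
  have hterm (P : Tile M) : 0 ≤ μ P / P.len / w := div_nonneg (div_len_nonneg hμ P) hw.le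
  rcases D.eq_empty_or_nonempty with hD | hD
  · rw [hD, Finset.card_empty, Nat.cast_zero]
    linarith [sum_nonneg fun P (_ : P ∈ {P ∈ S | x ∈ P.ival}) => hterm P]
  obtain ⟨Q₀, hQ₀, hmin⟩ :=
    Tile.exists_forall_le_of_mem_ival hD fun Q hQ => (mem_filter.1 hQ).2
  have hinj : Set.InjOn (level μ S w) D := by
    intro Q hQ Q' hQ' hlev
    obtain ⟨hQtop, hxQ⟩ := mem_filter.1 hQ
    obtain ⟨hQ'top, hxQ'⟩ := mem_filter.1 hQ'
    rcases Tile.le_or_le_of_mem_ival hxQ hxQ' with h | h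
    · exact (mem_filter.1 hQtop).2 Q' (mem_filter.1 hQ'top).1 h hlev.symm
    · exact ((mem_filter.1 hQ'top).2 Q (mem_filter.1 hQtop).1 h hlev).symm
  have hcard : #D ≤ level μ S w Q₀ + 1 := by
    simpa using card_le_card_of_injOn (t := range (level μ S w Q₀ + 1))
      (level μ S w) (fun Q hQ => mem_range.2 (Nat.lt_succ_of_le
        (level_anti hμ hw (hmin Q hQ)))) hinj
  have hupSum : upSum μ S Q₀ / w ≤ ∑ P ∈ S with x ∈ P.ival, μ P / P.len / w := by
    rw [upSum, sum_div]
    exact sum_le_sum_of_subset_of_nonneg (monotone_filter_right _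
      fun P _ h => h (mem_filter.1 hQ₀).2) fun P _ _ => hterm P
  calc (#D : ℝ) ≤ level μ S w Q₀ + 1 := by exact_mod_cast hcard
    _ ≤ _ := by linarith [level_le_upSum_div (S := S) hμ hw Q₀]

theorem sum_len_levelTops_le {R : Tile M} (hR : R ∈ S) (hle : ∀ P ∈ S, P.le R) :
    ∑ Q ∈ levelTops μ S w, Q.len ≤ (∑ P ∈ S, μ P) / w + R.len := by
  suffices key : ∑ Q ∈ levelTops μ S w, 1 * Q.len ≤
      ∑ P ∈ S, (μ P / P.len / w + if P = R then 1 else 0) * P.len by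
    have hweights : ∑ P ∈ S, (μ P / P.len / w + if P = R then 1 else 0) * P.len =
        (∑ P ∈ S, μ P) / w + R.len := by
      simp only [_root_.add_mul, boole_mul, sum_add_distrib, sum_ite_eq', if_pos hR,
        sum_div]
      congr 1
      exact sum_congr rfl fun P _ => by field_simp [P.len_pos.ne']
    simpa only [_root_.one_mul, hweights] using key
  refine sum_mul_len_le_of_forall fun x => ?_
  rw [sum_add_distrib, sum_ite_eq', sum_const, nsmul_one]
  by_cases hx : x ∈ R.ival
  · rw [if_pos (mem_filter.2 ⟨hR, hx⟩)]
    exact card_levelTops_filter_mem_le hμ hw x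
  · have hempty : {Q ∈ levelTops μ S w | x ∈ Q.ival} = ∅ := filter_false_of_mem
      fun Q hQ hxQ => hx (hle Q (mem_filter.1 (mem_filter.1 hQ).1).1 hxQ)
    rw [hempty, Finset.card_empty, Nat.cast_zero]
    exact add_nonneg (sum_nonneg fun P _ => div_nonneg (div_len_nonneg hμ P) hw.le)
      (by split_ifs <;> norm_num)

end Stopping

section Extrapolation

open Finset

variable {μ μ' : Tile M → ℝ} {S : Finset (Tile M)} {w C₁ C₂ : ℝ}

theorem sum_levelSlab_le (hμ : ∀ P, 0 ≤ μ P) (hw : 0 < w) (hS : IsConvex (S : Set (Tile M)))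
    (hloc : ∀ T : Tree M, IsConvex T.tiles → maxSize μ T.tiles ≤ 2 * w → treeSize μ' T ≤ C₂)
    {Q : Tile M} (hQ : Q ∈ levelTops μ S w) : ∑ P ∈ levelSlab μ S w Q, μ' P ≤ C₂ * Q.len := by
  let T : Tree M := ⟨levelSlab μ S w Q, Q, mem_filter.2 ⟨(mem_filter.1 hQ).1, Q.le_refl, rfl⟩,
    fun P hP => (mem_filter.1 hP).2.1⟩
  have := hloc T (isConvex_levelSlab hμ hw hS Q) (maxSize_levelSlab_le hμ hw Q)
  rwa [treeSize_le_iff, toFinset_coe] at this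

theorem sum_lightTiles_le (hμ : ∀ P, 0 ≤ μ P) (hμ' : ∀ P, 0 ≤ μ' P) (hw : 0 < w)
    (hS : IsConvex (S : Set (Tile M)))
    (hloc : ∀ T : Tree M, IsConvex T.tiles → maxSize μ T.tiles ≤ 2 * w → treeSize μ' T ≤ C₂) :
    ∑ P ∈ lightTiles μ S w, μ' P ≤ C₂ * ∑ Q ∈ levelTops μ S w, Q.len := by
  have hcover : lightTiles μ S w ⊆ (levelTops μ S w).sup (levelSlab μ S w) := fun P hP => by
    obtain ⟨Q, hQ, hPQ, hlev⟩ := exists_mem_levelTops_le hP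
    exact mem_sup.2 ⟨Q, hQ, mem_filter.2 ⟨hP, hPQ, hlev.symm⟩⟩
  have hunion (A B : Finset (Tile M)) : ∑ P ∈ A ∪ B, μ' P ≤ ∑ P ∈ A, μ' P + ∑ P ∈ B, μ' P := by
    rw [← sum_union_inter]
    linarith [sum_nonneg fun P (_ : P ∈ A ∩ B) => hμ' P]
  calc ∑ P ∈ lightTiles μ S w, μ' P
      ≤ ∑ P ∈ (levelTops μ S w).sup (levelSlab μ S w), μ' P :=
        sum_le_sum_of_subset_of_nonneg hcover fun P _ _ => hμ' P
    _ ≤ ∑ Q ∈ levelTops μ S w, ∑ P ∈ levelSlab μ S w Q, μ' P :=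
        apply_sup_le_sum (f := fun A => ∑ P ∈ A, μ' P) sum_empty (hunion _ _) _
    _ ≤ ∑ Q ∈ levelTops μ S w, C₂ * Q.len :=
        sum_le_sum fun Q hQ => sum_levelSlab_le hμ hw hS hloc hQ
    _ = C₂ * ∑ Q ∈ levelTops μ S w, Q.len := (mul_sum _ _ _).symm

theorem sum_heavy_le (hμ : ∀ P, 0 ≤ μ P) (hw : 0 < w) (hC₁ : 0 ≤ C₁)
    (hwk : ∀ P : Tile M, μ' P ≤ C₁ * P.len) :
    ∑ P ∈ S with ¬μ P ≤ w * P.len, μ' P ≤ C₁ / w * ∑ P ∈ S, μ P := by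
  calc ∑ P ∈ S with ¬μ P ≤ w * P.len, μ' P
      ≤ ∑ P ∈ S with ¬μ P ≤ w * P.len, C₁ / w * μ P := sum_le_sum fun P hP => by
        have hheavy : P.len ≤ μ P / w := by
          rw [le_div_iff₀ hw]; linarith [(mem_filter.1 hP).2]
        calc μ' P ≤ C₁ * P.len := hwk P
          _ ≤ C₁ * (μ P / w) := by gcongr
          _ = C₁ / w * μ P := by ring
    _ ≤ ∑ P ∈ S, C₁ / w * μ P := sum_le_sum_of_subset_of_nonneg (filter_subset _ _)
        fun P _ _ => mul_nonneg (div_nonneg hC₁ hw.le) (hμ P)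
    _ = C₁ / w * ∑ P ∈ S, μ P := (mul_sum _ _ _).symm

theorem sum_le_of_weak_carleson_of_local {B : ℝ} (hμ : ∀ P, 0 ≤ μ P) (hμ' : ∀ P, 0 ≤ μ' P)
    (hw : 0 < w) (hC₁ : 0 ≤ C₁) (hC₂ : 0 ≤ C₂) {T : Tree M} (hconv : IsConvex T.tiles)
    (hB : ∑ P ∈ T.tiles.toFinset, μ P ≤ B * T.len) (hwk : ∀ P : Tile M, μ' P ≤ C₁ * P.len)
    (hloc : ∀ T : Tree M, IsConvex T.tiles → maxSize μ T.tiles ≤ 2 * w → treeSize μ' T ≤ C₂) :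
    ∑ P ∈ T.tiles.toFinset, μ' P ≤ (1 + B / w) * (C₁ + C₂) * T.len := by
  set S := T.tiles.toFinset
  have hS : IsConvex (S : Set (Tile M)) := by rwa [Set.coe_toFinset]
  have htops : ∑ Q ∈ levelTops μ S w, Q.len ≤ (∑ P ∈ S, μ P) / w + T.len :=
    sum_len_levelTops_le hμ hw (Set.mem_toFinset.2 T.top_mem)
      fun P hP => T.le_top P (Set.mem_toFinset.1 hP)
  have hmass : (∑ P ∈ S, μ P) / w ≤ B / w * T.len := by
    rw [div_mul_eq_mul_div]; gcongr
  rw [← sum_filter_add_sum_filter_not S (fun P => μ P ≤ w * P.len)]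
  calc ∑ P ∈ S with μ P ≤ w * P.len, μ' P + ∑ P ∈ S with ¬μ P ≤ w * P.len, μ' P
      ≤ C₂ * ∑ Q ∈ levelTops μ S w, Q.len + C₁ / w * ∑ P ∈ S, μ P :=
        add_le_add (sum_lightTiles_le hμ hμ' hw hS hloc) (sum_heavy_le hμ hw hC₁ hwk)
    _ ≤ C₂ * (B / w * T.len + T.len) + C₁ / w * (B * T.len) := by
        gcongr
        exact htops.trans (by gcongr)
    _ ≤ (1 + B / w) * (C₁ + C₂) * T.len := by
        have : C₁ / w * (B * T.len) = C₁ * (B / w * T.len) := by ring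
        nlinarith [mul_nonneg hC₁ T.len_pos.le]

end Extrapolation

/-- Corollary 4.7: extrapolation of Carleson measures. -/
theorem statement5 (B δ : ℝ) (hB : 0 ≤ B) (hδ : 0 < δ) :
    ∃ C : ℝ, 0 < C ∧
      ∀ (M : ℕ) (μ μ' : Tile M → ℝ) (C₁ C₂ : ℝ),
        0 ≤ C₁ → 0 ≤ C₂ →
        (∀ P, 0 ≤ μ P) → (∀ P, 0 ≤ μ' P) →
        maxSize μ (univ : Set (Tile M)) ≤ B →
        (∀ P : Tile M, μ' P ≤ C₁ * P.len) →
        (∀ T : Tree M, IsConvex T.tiles → maxSize μ T.tiles ≤ δ → treeSize μ' T ≤ C₂) →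
        maxSize μ' (univ : Set (Tile M)) ≤ C * (C₁ + C₂) := by
  refine ⟨1 + B / (δ / 2), by positivity, ?_⟩
  intro M μ μ' C₁ C₂ hC₁ hC₂ hμ hμ' hμB hwk hloc
  refine maxSize_le (by positivity) fun T _ hconv => treeSize_le_iff.2 ?_
  have hTB : ∑ P ∈ T.tiles.toFinset, μ P ≤ B * T.len :=
    treeSize_le_iff.1 ((treeSize_le_maxSize (subset_univ _) hconv).trans hμB)
  exact sum_le_of_weak_carleson_of_local hμ hμ' (half_pos hδ) hC₁ hC₂ hconv hTB hwk
    fun T hT hsize => hloc T hT (by linarith)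

end Dyadic
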